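/- Let A be an ℕ-graded algebra, τ a graded automorphism of A, and B = _τA the graded twist. Given a graded left A-module M, define a B-module structure on the same graded vector space by a ⋆ m = τ^k(a)·m for a ∈ A and m ∈ M_k. Then this is a well-defined graded left B-module structure, and the assignment M ↦ _τM together with the identity on morphisms is a functor GrMod A → GrMod B. -/

import Mathlib

open DirectSum

/-- Let `A` be an ℕ-graded algebra, `τ` a graded automorphism, and
`B = _τA` the graded twist (with product `star`).  For a graded left `A`-module `M`,
define `a ⋆ m = τ^j(a) • m` for `m` of degree `j`, extended over the homogeneous
components of `m` (the operation `smulM`).  Then this is a well-defined graded left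
`B`-module structure (additive in both variables, unital, associative over `star`, and
respecting the grading), and the assignment `M ↦ _τM`, identity on morphisms, is
functorial: every degree-zero `A`-linear map `ψ : M → N` satisfies
`ψ (a ⋆ m) = a ⋆ ψ m`, i.e. is a `B`-module map `_τM → _τN`. -/
theorem stmt12 {k A M N : Type*} [CommRing k] [Ring A] [Algebra k A]
    (𝒜 : ℕ → Submodule k A) [GradedAlgebra 𝒜]
    (τ : A ≃ₐ[k] A) (hτ : ∀ n, ∀ a ∈ 𝒜 n, τ a ∈ 𝒜 n)
    (star : A → A → A)
    (hstar : ∀ x y : A,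
      star x y = DFinsupp.sumAddHom
        (fun n => (AddMonoidHom.mulLeft ((τ ^ n) x)).comp
          ((𝒜 n).subtype.toAddMonoidHom))
        (DirectSum.decompose 𝒜 y))
    [AddCommGroup M] [Module k M] [Module A M] [IsScalarTower k A M]
    (ℳ : ℕ → Submodule k M) [DirectSum.Decomposition ℳ]
    (hAM : ∀ n j, ∀ a ∈ 𝒜 n, ∀ m ∈ ℳ j, a • m ∈ ℳ (n + j))
    [AddCommGroup N] [Module k N] [Module A N] [IsScalarTower k A N]
    (𝒩 : ℕ → Submodule k N) [DirectSum.Decomposition 𝒩]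
    (hAN : ∀ n j, ∀ a ∈ 𝒜 n, ∀ x ∈ 𝒩 j, a • x ∈ 𝒩 (n + j))
    (smulM : A → M → M)
    (hsmulM : ∀ a m, smulM a m = DFinsupp.sumAddHom
        (fun j => (DistribMulAction.toAddMonoidHom M ((τ ^ j) a)).comp
          ((ℳ j).subtype.toAddMonoidHom))
        (DirectSum.decompose ℳ m))
    (smulN : A → N → N)
    (hsmulN : ∀ a x, smulN a x = DFinsupp.sumAddHom
        (fun j => (DistribMulAction.toAddMonoidHom N ((τ ^ j) a)).comp
          ((𝒩 j).subtype.toAddMonoidHom))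
        (DirectSum.decompose 𝒩 x)) :
    (∀ (a : A) (m m' : M), smulM a (m + m') = smulM a m + smulM a m') ∧
    (∀ (a a' : A) (m : M), smulM (a + a') m = smulM a m + smulM a' m) ∧
    (∀ m : M, smulM 1 m = m) ∧
    (∀ (a b : A) (m : M), smulM (star a b) m = smulM a (smulM b m)) ∧
    (∀ (n j : ℕ) (a : A) (m : M), a ∈ 𝒜 n → m ∈ ℳ j → smulM a m ∈ ℳ (n + j)) ∧
    (∀ ψ : M →ₗ[k] N, (∀ (a : A) (m : M), ψ (a • m) = a • ψ m) →
      (∀ j, ∀ m ∈ ℳ j, ψ m ∈ 𝒩 j) →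
      ∀ (a : A) (m : M), ψ (smulM a m) = smulN a (ψ m)) := by
  -- evaluation on homogeneous elements
  have hMhom : ∀ (a : A) (j : ℕ) (m : M), m ∈ ℳ j → smulM a m = (τ ^ j) a • m := by
    intro a j m hm
    rw [hsmulM, DirectSum.decompose_of_mem ℳ hm]
    erw [DFinsupp.sumAddHom_single]
    rfl
  have hNhom : ∀ (a : A) (j : ℕ) (x : N), x ∈ 𝒩 j → smulN a x = (τ ^ j) a • x := by
    intro a j x hx
    rw [hsmulN, DirectSum.decompose_of_mem 𝒩 hx]
    erw [DFinsupp.sumAddHom_single]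
    rfl
  have hstarhom : ∀ (x : A) (n : ℕ) (y : A), y ∈ 𝒜 n → star x y = (τ ^ n) x * y := by
    intro x n y hy
    rw [hstar, DirectSum.decompose_of_mem 𝒜 hy]
    erw [DFinsupp.sumAddHom_single]
    rfl
  have hM0 : ∀ a : A, smulM a 0 = 0 := by
    intro a; rw [hsmulM]; simp
  have hN0 : ∀ a : A, smulN a 0 = 0 := by
    intro a; rw [hsmulN]; simp
  have haddm : ∀ (a : A) (m m' : M), smulM a (m + m') = smulM a m + smulM a m' := by
    intro a m m'
    rw [hsmulM, hsmulM, hsmulM, DirectSum.decompose_add, AddMonoidHom.map_add]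
  have hNaddm : ∀ (a : A) (x x' : N), smulN a (x + x') = smulN a x + smulN a x' := by
    intro a x x'
    rw [hsmulN, hsmulN, hsmulN, DirectSum.decompose_add, AddMonoidHom.map_add]
  have hτpow : ∀ (j n : ℕ) (a : A), a ∈ 𝒜 n → (τ ^ j) a ∈ 𝒜 n := by
    intro j n a ha
    induction j with
    | zero => simpa using ha
    | succ j ih =>
      rw [pow_succ']
      exact hτ n _ ih
  have hτadd : ∀ (j n : ℕ) (a : A), (τ ^ j) ((τ ^ n) a) = (τ ^ (n + j)) a := by
    intro j n a
    rw [add_comm, pow_add]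
    rfl
  have hadda : ∀ (a a' : A) (m : M), smulM (a + a') m = smulM a m + smulM a' m := by
    intro a a' m
    induction m using DirectSum.Decomposition.inductionOn ℳ with
    | zero => rw [hM0, hM0, hM0, add_zero]
    | homogeneous m' =>
      obtain ⟨m, hm⟩ := m'
      rw [hMhom _ _ _ hm, hMhom _ _ _ hm, hMhom _ _ _ hm, map_add, add_smul]
    | add m m' ih ih' =>
      rw [haddm, haddm, haddm, ih, ih']
      abel
  refine ⟨haddm, hadda, ?_, ?_, ?_, ?_⟩
  · -- unital
    intro m
    induction m using DirectSum.Decomposition.inductionOn ℳ with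
    | zero => exact hM0 1
    | homogeneous m' =>
      obtain ⟨m, hm⟩ := m'
      rw [hMhom _ _ _ hm, map_one, one_smul]
    | add m m' ih ih' => rw [haddm, ih, ih']
  · -- associativity over star
    intro a b m
    induction b using DirectSum.Decomposition.inductionOn 𝒜 with
    | zero =>
      have hs0 : star a 0 = 0 := by rw [hstar]; simp
      have h0m : smulM 0 m = 0 := by
        have := hadda 0 0 m
        rw [add_zero] at this
        exact left_eq_add.mp this
      rw [hs0, h0m, hM0]
    | homogeneous b' =>
      obtain ⟨b, hb⟩ := b'
      rename_i n
      induction m using DirectSum.Decomposition.inductionOn ℳ with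
      | zero => rw [hM0, hM0, hM0]
      | homogeneous m' =>
        obtain ⟨m, hm⟩ := m'
        rename_i j
        have hb' : (τ ^ j) b ∈ 𝒜 n := hτpow j n b hb
        rw [hstarhom a n b hb, hMhom _ j m hm, hMhom b j m hm,
          hMhom a (n + j) _ (hAM n j _ hb' m hm), map_mul, mul_smul, hτadd]
      | add m m' ih ih' =>
        rw [haddm, haddm, haddm, ih, ih']
    | add b b' ihb ihb' =>
      have hs : star a (b + b') = star a b + star a b' := by
        rw [hstar, hstar, hstar, DirectSum.decompose_add, AddMonoidHom.map_add]
      rw [hs, hadda, ihb, ihb', hadda, haddm]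
  · -- grading
    intro n j a m ha hm
    rw [hMhom a j m hm]
    exact hAM n j _ (hτpow j n a ha) m hm
  · -- functoriality
    intro ψ hlin hdeg a m
    induction m using DirectSum.Decomposition.inductionOn ℳ with
    | zero => rw [hM0, map_zero, hN0]
    | homogeneous m' =>
      obtain ⟨m, hm⟩ := m'
      rename_i j
      rw [hMhom a j m hm, hlin, hNhom a j (ψ m) (hdeg j m hm)]
    | add m m' ih ih' =>
      rw [haddm, map_add, ih, ih', map_add, hNaddm]
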